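/- Let λ ∈ [0,2π) and assume inf_{x∈ℤ} |e^{iλ} − a_x^{(2,2)}| > 0. Then e^{iλ} is an eigenvalue of the time-evolution operator U if and only if there exists a nonzero Ψ̃ ∈ ℓ²(ℤ;ℂ²) such that for every x ∈ ℤ: e^{iλ} Ψ̃₁(x) = A_x(λ) Ψ̃₁(x+1) + B_x(λ) Ψ̃₂(x) and e^{iλ} Ψ̃₂(x+1) = C_x(λ) Ψ̃₁(x+1) + D_x(λ) Ψ̃₂(x). -/

import Mathlib

open Complex Matrix ComplexConjugate

noncomputable section

/-- `μ` is an eigenvalue of the time-evolution operator `U = SC` of the three-state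
quantum walk on `ℤ` with coin matrices `a x`: there is a nonzero square-summable
`Ψ : ℤ → ℂ³` with `UΨ = μΨ` (written componentwise, with the shift moving the first
component left and the third component right). -/
def IsQWEigenvalue (a : ℤ → Matrix (Fin 3) (Fin 3) ℂ) (μ : ℂ) : Prop :=
  ∃ Ψ : ℤ → Fin 3 → ℂ, Ψ ≠ 0 ∧
    Summable (fun x : ℤ => ∑ i, ‖Ψ x i‖ ^ 2) ∧
    ∀ x : ℤ,
      μ * Ψ x 0 = ∑ j, a (x + 1) 0 j * Ψ (x + 1) j ∧
      μ * Ψ x 1 = ∑ j, a x 1 j * Ψ x j ∧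
      μ * Ψ x 2 = ∑ j, a (x - 1) 2 j * Ψ (x - 1) j

/-- `A(λ)` for a 3×3 coin matrix `M`. -/
def coefA (M : Matrix (Fin 3) (Fin 3) ℂ) (lam : ℝ) : ℂ :=
  M 0 0 + M 0 1 * M 1 0 / (Complex.exp (lam * Complex.I) - M 1 1)

/-- `B(λ)` for a 3×3 coin matrix `M`. -/
def coefB (M : Matrix (Fin 3) (Fin 3) ℂ) (lam : ℝ) : ℂ :=
  M 0 2 + M 0 1 * M 1 2 / (Complex.exp (lam * Complex.I) - M 1 1)

/-- `C(λ)` for a 3×3 coin matrix `M`. -/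
def coefC (M : Matrix (Fin 3) (Fin 3) ℂ) (lam : ℝ) : ℂ :=
  M 2 0 + M 2 1 * M 1 0 / (Complex.exp (lam * Complex.I) - M 1 1)

/-- `D(λ)` for a 3×3 coin matrix `M`. -/
def coefD (M : Matrix (Fin 3) (Fin 3) ℂ) (lam : ℝ) : ℂ :=
  M 2 2 + M 2 1 * M 1 2 / (Complex.exp (lam * Complex.I) - M 1 1)


/-!
Since `e^{iλ}` stays uniformly away from `a_x^{(2,2)}`, the middle row of `UΨ = e^{iλ}Ψ` can be
solved for `Ψ₂(x)` as `(a_x^{(2,1)} Ψ₁(x) + a_x^{(2,3)} Ψ₃(x)) / (e^{iλ} - a_x^{(2,2)})`, a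
combination of `Ψ₁(x)` and `Ψ₃(x)` with uniformly bounded coefficients. Substituting it into the
first and third rows (a Schur complement) turns them into the reduced system for
`Ψ̃(x) = (Ψ₁(x - 1), Ψ₃(x))`; conversely a solution `Ψ̃` of the reduced system is completed to an
eigenvector by the same formula, which keeps it square-summable.
-/

section SquareSummable

variable {ι κ E F G : Type*} [SeminormedAddCommGroup E] [SeminormedAddCommGroup F]
  [SeminormedAddCommGroup G]

theorem summable_sum_sq_norm_iff [Fintype κ] {f : ι → κ → E} :
    Summable (fun x => ∑ i, ‖f x i‖ ^ 2) ↔ ∀ i, Summable fun x => ‖f x i‖ ^ 2 := by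
  refine ⟨fun h i => h.of_nonneg_of_le (fun _ => by positivity) fun x => ?_,
    fun h => summable_sum fun i _ => h i⟩
  exact Finset.single_le_sum (f := fun i => ‖f x i‖ ^ 2) (fun _ _ => by positivity)
    (Finset.mem_univ i)

theorem summable_sq_norm_of_norm_le_mul_add {f : ι → E} {g : ι → F} {h : ι → G} {c : ℝ}
    (hg : Summable fun x => ‖g x‖ ^ 2) (hh : Summable fun x => ‖h x‖ ^ 2)
    (hf : ∀ x, ‖f x‖ ≤ c * (‖g x‖ + ‖h x‖)) : Summable fun x => ‖f x‖ ^ 2 := by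
  refine ((hg.add hh).mul_left (2 * c ^ 2)).of_nonneg_of_le (fun _ => by positivity)
    fun x => ?_
  calc ‖f x‖ ^ 2 ≤ (c * (‖g x‖ + ‖h x‖)) ^ 2 := pow_le_pow_left₀ (norm_nonneg _) (hf x) 2
    _ ≤ 2 * c ^ 2 * (‖g x‖ ^ 2 + ‖h x‖ ^ 2) := by
      nlinarith [mul_nonneg (sq_nonneg c) (sq_nonneg (‖g x‖ - ‖h x‖))]

end SquareSummable

section Elimination

variable (M : Matrix (Fin 3) (Fin 3) ℂ) {μ : ℂ} {lam : ℝ} {v : Fin 3 → ℂ}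

def middleEntry (μ v₀ v₂ : ℂ) : ℂ :=
  (M 1 0 * v₀ + M 1 2 * v₂) / (μ - M 1 1)

variable {M}

theorem mul_apply_one_eq_iff (hμ : μ - M 1 1 ≠ 0) :
    μ * v 1 = ∑ j, M 1 j * v j ↔ v 1 = middleEntry M μ (v 0) (v 2) := by
  rw [Fin.sum_univ_three, middleEntry, eq_div_iff hμ]
  constructor <;> intro h <;> linear_combination h

theorem sum_row_zero_eq_coefA_add_coefB (hμ : cexp (lam * I) - M 1 1 ≠ 0)
    (hv : v 1 = middleEntry M (cexp (lam * I)) (v 0) (v 2)) :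
    ∑ j, M 0 j * v j = coefA M lam * v 0 + coefB M lam * v 2 := by
  rw [Fin.sum_univ_three, hv, middleEntry, coefA, coefB]
  field_simp
  ring

theorem sum_row_two_eq_coefC_add_coefD (hμ : cexp (lam * I) - M 1 1 ≠ 0)
    (hv : v 1 = middleEntry M (cexp (lam * I)) (v 0) (v 2)) :
    ∑ j, M 2 j * v j = coefC M lam * v 0 + coefD M lam * v 2 := by
  rw [Fin.sum_univ_three, hv, middleEntry, coefC, coefD]
  field_simp
  ring

theorem norm_middleEntry_le (hM : M ∈ unitaryGroup (Fin 3) ℂ) (v₀ v₂ : ℂ) :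
    ‖middleEntry M μ v₀ v₂‖ ≤ (‖v₀‖ + ‖v₂‖) / ‖μ - M 1 1‖ := by
  have hnum : ‖M 1 0 * v₀ + M 1 2 * v₂‖ ≤ ‖v₀‖ + ‖v₂‖ :=
    calc ‖M 1 0 * v₀ + M 1 2 * v₂‖ ≤ ‖M 1 0‖ * ‖v₀‖ + ‖M 1 2‖ * ‖v₂‖ :=
          (norm_add_le _ _).trans_eq (by rw [norm_mul, norm_mul])
      _ ≤ 1 * ‖v₀‖ + 1 * ‖v₂‖ := by gcongr <;> exact entry_norm_bound_of_unitary hM _ _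
      _ = ‖v₀‖ + ‖v₂‖ := by ring
  rw [middleEntry, norm_div]
  gcongr

end Elimination

section QuantumWalk

variable {a : ℤ → Matrix (Fin 3) (Fin 3) ℂ} {μ : ℂ} {lam : ℝ}
  {Ψ : ℤ → Fin 3 → ℂ} {Φ : ℤ → Fin 2 → ℂ}

def QWEigenEq (a : ℤ → Matrix (Fin 3) (Fin 3) ℂ) (μ : ℂ) (Ψ : ℤ → Fin 3 → ℂ) : Prop :=
  ∀ x : ℤ,
    μ * Ψ x 0 = ∑ j, a (x + 1) 0 j * Ψ (x + 1) j ∧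
    μ * Ψ x 1 = ∑ j, a x 1 j * Ψ x j ∧
    μ * Ψ x 2 = ∑ j, a (x - 1) 2 j * Ψ (x - 1) j

def ReducedEq (a : ℤ → Matrix (Fin 3) (Fin 3) ℂ) (lam : ℝ) (Φ : ℤ → Fin 2 → ℂ) : Prop :=
  ∀ x : ℤ,
    cexp (lam * I) * Φ x 0 = coefA (a x) lam * Φ (x + 1) 0 + coefB (a x) lam * Φ x 1 ∧
    cexp (lam * I) * Φ (x + 1) 1 = coefC (a x) lam * Φ (x + 1) 0 + coefD (a x) lam * Φ x 1

def reducedState (Ψ : ℤ → Fin 3 → ℂ) : ℤ → Fin 2 → ℂ :=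
  fun x => ![Ψ (x - 1) 0, Ψ x 2]

def liftedState (a : ℤ → Matrix (Fin 3) (Fin 3) ℂ) (μ : ℂ) (Φ : ℤ → Fin 2 → ℂ) :
    ℤ → Fin 3 → ℂ :=
  fun x => ![Φ (x + 1) 0, middleEntry (a x) μ (Φ (x + 1) 0) (Φ x 1), Φ x 1]

theorem reducedState_ne_zero (hd : ∀ x, μ - a x 1 1 ≠ 0) (hΨ : QWEigenEq a μ Ψ)
    (hne : Ψ ≠ 0) : reducedState Ψ ≠ 0 := by
  intro h
  have h0 (x : ℤ) : Ψ x 0 = 0 := by simpa [reducedState] using congrFun (congrFun h (x + 1)) 0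
  have h2 (x : ℤ) : Ψ x 2 = 0 := by simpa [reducedState] using congrFun (congrFun h x) 1
  refine hne (funext fun x => funext fun i => ?_)
  have h1 := (mul_apply_one_eq_iff (hd x)).1 (hΨ x).2.1
  fin_cases i <;> simp [h0, h1, h2, middleEntry]

theorem summable_reducedState (h : Summable fun x => ∑ i, ‖Ψ x i‖ ^ 2) :
    Summable fun x => ∑ i, ‖reducedState Ψ x i‖ ^ 2 := by
  rw [summable_sum_sq_norm_iff] at h ⊢
  intro i
  fin_cases i
  · exact (h 0).comp_injective (sub_left_injective (b := 1))
  · exact h 2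

theorem reducedEq_reducedState (hd : ∀ x, cexp (lam * I) - a x 1 1 ≠ 0)
    (hΨ : QWEigenEq a (cexp (lam * I)) Ψ) : ReducedEq a lam (reducedState Ψ) := by
  intro x
  have hmid := (mul_apply_one_eq_iff (hd x)).1 (hΨ x).2.1
  have htop := (hΨ (x - 1)).1
  have hbot := (hΨ (x + 1)).2.2
  simp only [sub_add_cancel, add_sub_cancel_right] at htop hbot
  simp only [reducedState, Matrix.cons_val_zero, Matrix.cons_val_one, add_sub_cancel_right]
  exact ⟨htop.trans (sum_row_zero_eq_coefA_add_coefB (hd x) hmid),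
    hbot.trans (sum_row_two_eq_coefC_add_coefD (hd x) hmid)⟩

theorem liftedState_ne_zero (hne : Φ ≠ 0) : liftedState a μ Φ ≠ 0 := by
  intro h
  refine hne (funext fun x => funext fun i => ?_)
  fin_cases i
  · simpa [liftedState] using congrFun (congrFun h (x - 1)) 0
  · simpa [liftedState] using congrFun (congrFun h x) 2

theorem summable_liftedState (hunit : ∀ x, a x ∈ unitaryGroup (Fin 3) ℂ) {ε : ℝ}
    (hε : 0 < ε) (hle : ∀ x, ε ≤ ‖μ - a x 1 1‖) (h : Summable fun x => ∑ i, ‖Φ x i‖ ^ 2) :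
    Summable fun x => ∑ i, ‖liftedState a μ Φ x i‖ ^ 2 := by
  rw [summable_sum_sq_norm_iff] at h ⊢
  have h0 : Summable fun x => ‖Φ (x + 1) 0‖ ^ 2 := (h 0).comp_injective (add_left_injective 1)
  intro i
  fin_cases i
  · exact h0
  · refine summable_sq_norm_of_norm_le_mul_add (c := ε⁻¹) h0 (h 1) fun x => ?_
    calc ‖middleEntry (a x) μ (Φ (x + 1) 0) (Φ x 1)‖
        ≤ (‖Φ (x + 1) 0‖ + ‖Φ x 1‖) / ‖μ - a x 1 1‖ := norm_middleEntry_le (hunit x) _ _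
      _ ≤ (‖Φ (x + 1) 0‖ + ‖Φ x 1‖) / ε := by gcongr; exact hle x
      _ = ε⁻¹ * (‖Φ (x + 1) 0‖ + ‖Φ x 1‖) := div_eq_inv_mul _ _
  · exact h 1

theorem qwEigenEq_liftedState (hd : ∀ x, cexp (lam * I) - a x 1 1 ≠ 0)
    (hΦ : ReducedEq a lam Φ) : QWEigenEq a (cexp (lam * I)) (liftedState a (cexp (lam * I)) Φ) := by
  have hmid (x : ℤ) : liftedState a (cexp (lam * I)) Φ x 1 =
      middleEntry (a x) (cexp (lam * I)) (liftedState a (cexp (lam * I)) Φ x 0)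
        (liftedState a (cexp (lam * I)) Φ x 2) := rfl
  intro x
  refine ⟨?_, (mul_apply_one_eq_iff (hd x)).2 (hmid x), ?_⟩
  · rw [sum_row_zero_eq_coefA_add_coefB (hd (x + 1)) (hmid (x + 1))]
    simpa [liftedState] using (hΦ (x + 1)).1
  · rw [sum_row_two_eq_coefC_add_coefD (hd (x - 1)) (hmid (x - 1))]
    simpa [liftedState] using (hΦ (x - 1)).2

end QuantumWalk

theorem eigenvalue_iff_reduced_system (a : ℤ → Matrix (Fin 3) (Fin 3) ℂ)
    (hunit : ∀ x, a x ∈ Matrix.unitaryGroup (Fin 3) ℂ)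
    (lam : ℝ)
    (hinf : 0 < ⨅ x : ℤ, ‖Complex.exp (lam * Complex.I) - a x 1 1‖) :
    IsQWEigenvalue a (Complex.exp (lam * Complex.I)) ↔
      ∃ Ψ : ℤ → Fin 2 → ℂ, Ψ ≠ 0 ∧
        Summable (fun x : ℤ => ∑ i, ‖Ψ x i‖ ^ 2) ∧
        ∀ x : ℤ,
          Complex.exp (lam * Complex.I) * Ψ x 0 =
              coefA (a x) lam * Ψ (x + 1) 0 + coefB (a x) lam * Ψ x 1 ∧
          Complex.exp (lam * Complex.I) * Ψ (x + 1) 1 =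
              coefC (a x) lam * Ψ (x + 1) 0 + coefD (a x) lam * Ψ x 1 := by
  have hle (x : ℤ) : ⨅ y, ‖cexp (lam * I) - a y 1 1‖ ≤ ‖cexp (lam * I) - a x 1 1‖ :=
    ciInf_le ⟨0, Set.forall_mem_range.2 fun _ => norm_nonneg _⟩ x
  have hd (x : ℤ) : cexp (lam * I) - a x 1 1 ≠ 0 := norm_pos_iff.1 (hinf.trans_le (hle x))
  constructor
  · rintro ⟨Ψ, hne, hsum, hΨ⟩
    exact ⟨reducedState Ψ, reducedState_ne_zero hd hΨ hne, summable_reducedState hsum,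
      reducedEq_reducedState hd hΨ⟩
  · rintro ⟨Φ, hne, hsum, hΦ⟩
    exact ⟨liftedState a _ Φ, liftedState_ne_zero hne, summable_liftedState hunit hinf hle hsum,
      qwEigenEq_liftedState hd hΦ⟩
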